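/- arXiv:2104.14967 — 2 statements merged into one kernel-verified Lean document; each statement's English description precedes it below -/
import Mathlib

section
/- Let G be a finite non-abelian group and suppose u ∈ G \ Z(G) satisfies: for all v ∈ G \ Z(G), either C(u) = C(v) or C(u) ∩ C(v) = Z(G). Then |C(u)| is an eigenvalue of the Laplacian of the commuting graph C_G with multiplicity at least |C(u) \ Z(G)| - 1. -/
/-- The commuting graph of a group: distinct vertices are adjacent iff they commute. -/
def commGraph (G : Type*) [Group G] : SimpleGraph G where
  Adj u v := u ≠ v ∧ u * v = v * u
  symm := ⟨fun _ _ h => ⟨h.1.symm, h.2.symm⟩⟩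
  loopless := ⟨fun _ h => h.1 rfl⟩

instance {G : Type*} [Group G] [DecidableEq G] : DecidableRel (commGraph G).Adj :=
  fun u v => inferInstanceAs (Decidable (u ≠ v ∧ u * v = v * u))

/-- The Laplacian matrix of the commuting graph. -/
noncomputable def commLap (G : Type*) [Group G] [Fintype G] [DecidableEq G] :
    Matrix G G ℝ :=
  SimpleGraph.lapMatrix ℝ (commGraph G)

/-- Multiplicity of `μ` as an eigenvalue of the Laplacian of the commuting graph. -/
noncomputable def lapMult (G : Type*) [Group G] [Fintype G] [DecidableEq G] (μ : ℝ) : ℕ :=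
  Module.finrank ℝ (LinearMap.ker (Matrix.toLin' (commLap G - μ • 1)))

/-- Centralizer of an element, as a set. -/
def centSet {G : Type*} [Group G] (u : G) : Set G := {x | x * u = u * x}

/-- Edge boundary of a set in the commuting graph. -/
def edgeBoundary (G : Type*) [Group G] (S : Set G) : Set (Sym2 G) :=
  {e | e ∈ (commGraph G).edgeSet ∧ ∃ u ∈ S, ∃ v ∈ Sᶜ, e = s(u, v)}

/-!
For `v ∈ C(u) \ Z(G)` the alternative `C(u) ∩ C(v) = Z(G)` is impossible, since `v` lies in the
intersection; hence `C(v) = C(u)`. In the commuting graph the closed neighbourhood of `v` is `C(v)`,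
so all vertices of `C(u) \ Z(G)` are adjacent twins with closed neighbourhood `C(u)`. For adjacent
twins `u, v` of degree `d`, the vector `e_v - e_u` is a Laplacian eigenvector with eigenvalue
`d + 1 = |C(u)|`, and the vectors `e_v - e_u`, `v ≠ u`, are linearly independent.
-/

open Matrix

theorem linearIndependent_single_one_sub_single_one {ι R : Type*} [Ring R] [DecidableEq ι]
    {s : Set ι} {u : ι} (hu : u ∉ s) :
    LinearIndependent R (fun v : s ↦ (Pi.single (v : ι) (1 : R) - Pi.single u 1 : ι → R)) := by
  refine LinearIndependent.of_comp (LinearMap.funLeft R R ((↑) : s → ι)) ?_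
  convert Pi.linearIndependent_single_one s R with v
  ext w
  simp [LinearMap.funLeft_apply, Pi.single_apply, Subtype.ext_iff, ne_of_mem_of_not_mem w.2 hu]

namespace SimpleGraph

variable {V : Type*} {G : SimpleGraph V}

theorem natCard_insert_neighborSet [Fintype V] [DecidableRel G.Adj] (v : V) :
    Nat.card (insert v (G.neighborSet v) : Set V) = G.degree v + 1 := by
  rw [Nat.card_coe_set_eq, Set.ncard_insert_of_notMem (G.notMem_neighborSet_self),
    ← Nat.card_coe_set_eq, Nat.card_eq_fintype_card, card_neighborSet_eq_degree]

theorem lapMatrix_mulVec_single_sub_single_of_insert_neighborSet_eq [Fintype V] [DecidableEq V]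
    [DecidableRel G.Adj] {u v : V}
    (h : insert u (G.neighborSet u) = insert v (G.neighborSet v)) :
    G.lapMatrix ℝ *ᵥ (Pi.single v 1 - Pi.single u 1) =
      ((G.degree v + 1 : ℕ) : ℝ) • (Pi.single v 1 - Pi.single u 1) := by
  rcases eq_or_ne u v with rfl | huv
  · simp
  have hadj : G.Adj u v := by
    have hv : v ∈ insert u (G.neighborSet u) := h ▸ Set.mem_insert v _
    simpa [huv.symm] using hv
  have hdeg : G.degree u = G.degree v := by
    have := congrArg (fun s : Set V ↦ Nat.card s) h
    simpa only [natCard_insert_neighborSet, add_left_inj] using this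
  ext i
  have hsum : ∑ w ∈ G.neighborFinset i, (Pi.single v 1 - Pi.single u 1 : V → ℝ) w =
      (if G.Adj i v then 1 else 0) - (if G.Adj i u then 1 else 0) := by
    simp [Finset.sum_sub_distrib, Finset.sum_pi_single']
  rw [lapMatrix_mulVec_apply, hsum]
  rcases eq_or_ne i v with rfl | hiv
  · simp [huv, hadj.symm]
  rcases eq_or_ne i u with rfl | hiu
  · simp [hiv, hadj, hdeg, sub_eq_add_neg, add_comm]
  have htwin : G.Adj i u ↔ G.Adj i v := by
    simpa [hiu, hiv, adj_comm] using Set.ext_iff.1 h i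
  simp [hiu, hiv, htwin]

theorem card_sub_one_le_finrank_ker_lapMatrix_sub [Fintype V] [DecidableEq V] [DecidableRel G.Adj]
    {S C : Set V} (hS : ∀ v ∈ S, insert v (G.neighborSet v) = C) :
    Nat.card S - 1 ≤
      Module.finrank ℝ (LinearMap.ker (toLin' (G.lapMatrix ℝ - (Nat.card C : ℝ) • 1))) := by
  rcases S.eq_empty_or_nonempty with rfl | ⟨u, hu⟩
  · simp
  set K := LinearMap.ker (toLin' (G.lapMatrix ℝ - (Nat.card C : ℝ) • 1))
  have hker : ∀ v ∈ S, (Pi.single v 1 - Pi.single u 1 : V → ℝ) ∈ K := by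
    intro v hv
    have hC : Nat.card C = G.degree v + 1 := hS v hv ▸ natCard_insert_neighborSet v
    rw [LinearMap.mem_ker, toLin'_apply, sub_mulVec, smul_mulVec, one_mulVec, hC,
      lapMatrix_mulVec_single_sub_single_of_insert_neighborSet_eq
        ((hS u hu).trans (hS v hv).symm), sub_self]
  let b : (S \ {u} : Set V) → K := fun v ↦ ⟨_, hker v v.2.1⟩
  have hb : LinearIndependent ℝ b :=
    .of_comp K.subtype (linearIndependent_single_one_sub_single_one (by simp))
  have := Fintype.ofFinite (S \ {u} : Set V)
  calc Nat.card S - 1 = Nat.card (S \ {u} : Set V) := by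
        rw [Nat.card_coe_set_eq, Nat.card_coe_set_eq, Set.ncard_sdiff_singleton_of_mem hu]
    _ = Fintype.card (S \ {u} : Set V) := Nat.card_eq_fintype_card
    _ ≤ Module.finrank ℝ K := hb.fintype_card_le_finrank

end SimpleGraph

theorem insert_neighborSet_commGraph {G : Type*} [Group G] (v : G) :
    insert v ((commGraph G).neighborSet v) = centSet v := by
  ext x
  by_cases hx : x = v
  · simp [hx, centSet]
  · simp [hx, commGraph, centSet, Ne.symm hx, eq_comm]

theorem centSet_eq_of_mem_centSet_diff_center {G : Type*} [Group G] {u v : G}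
    (hcond : ∀ v : G, v ∉ (Subgroup.center G : Set G) →
      centSet u = centSet v ∨ centSet u ∩ centSet v = (Subgroup.center G : Set G))
    (hv : v ∈ centSet u \ (Subgroup.center G : Set G)) :
    centSet v = centSet u := by
  refine ((hcond v hv.2).resolve_right fun h ↦ hv.2 ?_).symm
  exact h ▸ ⟨hv.1, rfl⟩

theorem centralizer_card_eigenvalue_general (G : Type*) [Group G] [Fintype G] [DecidableEq G]
    (u : G)
    (hcond : ∀ v : G, v ∉ (Subgroup.center G : Set G) →
      centSet u = centSet v ∨ centSet u ∩ centSet v = (Subgroup.center G : Set G)) :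
    Nat.card (centSet u \ (Subgroup.center G : Set G) : Set G) - 1 ≤
      lapMult G (Nat.card (centSet u)) := by
  refine (commGraph G).card_sub_one_le_finrank_ker_lapMatrix_sub fun v hv ↦ ?_
  rw [insert_neighborSet_commGraph, centSet_eq_of_mem_centSet_diff_center hcond hv]

/-- If `u ∉ Z(G)` satisfies: for all `v ∉ Z(G)`, `C(u) = C(v)` or `C(u) ∩ C(v) = Z(G)`,
then `|C(u)|` is an eigenvalue of the Laplacian of the commuting graph with multiplicity
at least `|C(u) \ Z(G)| - 1`. -/
theorem centralizer_card_eigenvalue (G : Type*) [Group G] [Fintype G] [DecidableEq G]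
    (hna : ¬ ∀ a b : G, a * b = b * a) (u : G)
    (hu : u ∉ (Subgroup.center G : Set G))
    (hcond : ∀ v : G, v ∉ (Subgroup.center G : Set G) →
      centSet u = centSet v ∨ centSet u ∩ centSet v = (Subgroup.center G : Set G)) :
    Nat.card (centSet u \ (Subgroup.center G : Set G) : Set G) - 1 ≤
      lapMult G (Nat.card (centSet u)) :=
  centralizer_card_eigenvalue_general G u hcond
end

section
/- Let G be a finite non-abelian group such that for all u, v ∈ G \ Z(G), either C(u) = C(v) or C(u) ∩ C(v) = Z(G). Then the algebraic connectivity (second-smallest Laplacian eigenvalue) of the commuting graph C_G equals |Z(G)|. -/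
/-!
Central elements are universal vertices of the commuting graph, and this alone gives the lower
bound: if `L f = μ f` with `μ ≠ 0`, then `∑ f = 0`, so at a universal vertex `z` the eigen-equation
reads `μ f z = |G| f z`. Unless `μ = |G|`, `f` vanishes on the centre `Z`, and then each vertex of `Z`
contributes `∑ f²` to the quadratic form `fᵀ L f`, whence `μ ≥ |Z|`.

Under the hypothesis, each `C(u) \ Z` with `u ∉ Z` is a clique all of whose vertices have closed
neighbourhood exactly `C(u)`. For a clique `A` whose closed neighbourhoods are `S ∪ A`, one has
`L 1_A = |S| 1_A - |A| 1_S`, so for non-commuting `a, b` the vector `|B| 1_A - |A| 1_B`, with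
`A = C(a) \ Z` and `B = C(b) \ Z`, is an eigenvector for `|Z|`. Finally the graph is connected
(`1` is universal), so `0` is a simple eigenvalue.
-/

open Finset Matrix

theorem Matrix.finrank_ker_toLin'_sub_smul_pos_iff {n K : Type*} [Fintype n] [DecidableEq n]
    [Field K] (M : Matrix n n K) (μ : K) :
    0 < Module.finrank K (LinearMap.ker (toLin' (M - μ • 1))) ↔ ∃ v ≠ 0, M *ᵥ v = μ • v := by
  simp only [Module.finrank_pos_iff_exists_ne_zero, ne_eq, Subtype.exists, LinearMap.mem_ker,
    toLin'_apply, sub_mulVec, smul_mulVec, one_mulVec, sub_eq_zero, Submodule.mk_eq_zero]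
  exact ⟨fun ⟨v, hv, hv0⟩ => ⟨v, hv0, hv⟩, fun ⟨v, hv0, hv⟩ => ⟨v, hv, hv0⟩⟩

namespace SimpleGraph

variable {V : Type*} [Fintype V] [DecidableEq V] {G : SimpleGraph V} [DecidableRel G.Adj]

theorem Connected.finrank_ker_toLin'_lapMatrix_eq_one (hG : G.Connected) :
    Module.finrank ℝ (LinearMap.ker (toLin' (G.lapMatrix ℝ))) = 1 := by
  have := hG.preconnected.subsingleton_connectedComponent
  rw [← card_connectedComponent_eq_finrank_ker_toLin'_lapMatrix]
  exact Fintype.card_eq_one_iff.mpr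
    ⟨G.connectedComponentMk hG.nonempty.some, fun _ => Subsingleton.elim _ _⟩

theorem lapMatrix_mulVec_apply_eq_sum_sub {R : Type*} [NonAssocRing R] (v : V) (f : V → R) :
    (G.lapMatrix R *ᵥ f) v = ∑ u ∈ G.neighborFinset v, (f v - f u) := by
  rw [lapMatrix_mulVec_apply, sum_sub_distrib, sum_const, card_neighborFinset_eq_degree,
    nsmul_eq_mul]

theorem IsUniversal.lapMatrix_mulVec_apply {R : Type*} [NonAssocRing R] {v : V}
    (hv : G.IsUniversal v) (f : V → R) :
    (G.lapMatrix R *ᵥ f) v = Fintype.card V * f v - ∑ u, f u := by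
  have hN : G.neighborFinset v = univ.erase v := by
    ext u
    simpa [eq_comm] using ⟨fun h => h.ne, fun h => hv h⟩
  rw [lapMatrix_mulVec_apply_eq_sum_sub, hN, sum_erase _ (sub_self _), sum_sub_distrib, sum_const,
    card_univ, nsmul_eq_mul]

theorem sum_eq_zero_of_lapMatrix_mulVec_eq_smul {f : V → ℝ} {μ : ℝ} (hμ : μ ≠ 0)
    (hf : G.lapMatrix ℝ *ᵥ f = μ • f) : ∑ v, f v = 0 := by
  have h : (fun _ => (1 : ℝ)) ⬝ᵥ (G.lapMatrix ℝ *ᵥ f) = 0 := by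
    rw [dotProduct_mulVec, ← (isSymm_lapMatrix ℝ G).eq, vecMul_transpose,
      lapMatrix_mulVec_const_eq_zero, zero_dotProduct]
  rw [hf, dotProduct_smul, smul_eq_mul, mul_eq_zero] at h
  simpa [dotProduct] using h.resolve_left hμ

theorem card_mul_sum_sq_le_dotProduct_lapMatrix_mulVec (S : Finset V)
    (hS : ∀ v ∈ S, G.IsUniversal v) {f : V → ℝ} (hf : ∀ v ∈ S, f v = 0) :
    #S * ∑ v, f v ^ 2 ≤ f ⬝ᵥ (G.lapMatrix ℝ *ᵥ f) := by
  let s : V → ℝ := fun v => if v ∈ S then 1 else 0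
  have hpair : ∀ i j, (s i + s j) * (f i - f j) ^ 2 ≤ if G.Adj i j then (f i - f j) ^ 2 else 0 := by
    intro i j
    by_cases hij : i = j
    · simp [hij]
    by_cases hi : i ∈ S <;> by_cases hj : j ∈ S
    · simp [s, hi, hj, hf i hi, hf j hj]
    · simp [s, hi, hj, hS i hi hij]
    · simp [s, hi, hj, (hS j hj (Ne.symm hij)).symm]
    · simp only [s, hi, hj, if_false, add_zero, zero_mul]
      split_ifs <;> positivity
  have hrow : ∀ i j, s i * (f i - f j) ^ 2 = s i * f j ^ 2 := by
    intro i j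
    by_cases hi : i ∈ S <;> simp [s, hi, hf]
  have hhalf : ∑ i, ∑ j, s i * (f i - f j) ^ 2 = #S * ∑ v, f v ^ 2 := by
    simp_rw [hrow, ← mul_sum, ← sum_mul, s, sum_boole, filter_mem_eq_inter, univ_inter]
  calc (#S : ℝ) * ∑ v, f v ^ 2
      = (∑ i, ∑ j, (s i + s j) * (f i - f j) ^ 2) / 2 := by
        have hswap : ∑ i, ∑ j, s j * (f i - f j) ^ 2 = ∑ i, ∑ j, s i * (f i - f j) ^ 2 := by
          rw [sum_comm]
          exact sum_congr rfl fun i _ => sum_congr rfl fun j _ => by rw [sub_sq_comm]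
        simp_rw [add_mul, sum_add_distrib]
        rw [hswap, hhalf]
        ring
    _ ≤ (∑ i, ∑ j, if G.Adj i j then (f i - f j) ^ 2 else 0) / 2 := by
        gcongr with i _ j _
        exact hpair i j
    _ = f ⬝ᵥ (G.lapMatrix ℝ *ᵥ f) := by
        rw [← lapMatrix_toLinearMap₂', toLinearMap₂'_apply']

theorem card_le_of_lapMatrix_mulVec_eq_smul (S : Finset V) (hS : ∀ v ∈ S, G.IsUniversal v)
    {f : V → ℝ} (hf : f ≠ 0) {μ : ℝ} (hμ : μ ≠ 0) (h : G.lapMatrix ℝ *ᵥ f = μ • f) :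
    (#S : ℝ) ≤ μ := by
  have hsum := sum_eq_zero_of_lapMatrix_mulVec_eq_smul hμ h
  by_cases hμV : μ = Fintype.card V
  · rw [hμV]
    exact_mod_cast card_le_univ S
  have hvanish : ∀ v ∈ S, f v = 0 := by
    intro v hv
    have hv' := (hS v hv).lapMatrix_mulVec_apply f
    rw [h, hsum, Pi.smul_apply, smul_eq_mul, sub_zero] at hv'
    exact (mul_eq_mul_right_iff.mp hv').resolve_left hμV
  have hpos : 0 < ∑ v, f v ^ 2 := by
    obtain ⟨v, hv⟩ := Function.ne_iff.mp hf
    exact sum_pos' (fun _ _ => sq_nonneg _) ⟨v, mem_univ v, pow_two_pos_of_ne_zero hv⟩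
  have hquad : f ⬝ᵥ (G.lapMatrix ℝ *ᵥ f) = μ * ∑ v, f v ^ 2 := by
    rw [h, dotProduct_smul, smul_eq_mul]
    simp only [dotProduct, sq]
  exact le_of_mul_le_mul_right
    ((card_mul_sum_sq_le_dotProduct_lapMatrix_mulVec S hS hvanish).trans_eq hquad) hpos

theorem lapMatrix_mulVec_indicator_apply {S A : Finset V} (hSA : Disjoint S A)
    (hA : ∀ a ∈ A, ∀ v, a ≠ v → (G.Adj a v ↔ v ∈ S ∪ A)) (v : V) :
    (G.lapMatrix ℝ *ᵥ fun u => if u ∈ A then 1 else 0) v =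
      (if v ∈ A then (#S : ℝ) else 0) - if v ∈ S then (#A : ℝ) else 0 := by
  rw [lapMatrix_mulVec_apply_eq_sum_sub]
  by_cases hv : v ∈ A
  · have hvS : v ∉ S := disjoint_right.mp hSA hv
    have hN : {u ∈ G.neighborFinset v | u ∉ A} = S := by
      ext u
      simp only [mem_filter, mem_neighborFinset]
      constructor
      · rintro ⟨hadj, huA⟩
        simpa [huA] using (hA v hv u hadj.ne).mp hadj
      · intro huS
        have huA := Finset.disjoint_left.mp hSA huS
        exact ⟨(hA v hv u (ne_of_mem_of_not_mem hv huA)).mpr (mem_union_left _ huS), huA⟩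
    have hterm : ∀ u, (1 : ℝ) - (if u ∈ A then 1 else 0) = if u ∉ A then 1 else 0 := by
      intro u
      split_ifs <;> simp_all
    simp only [hv, hvS, if_true, if_false, sub_zero, hterm, sum_boole, hN]
  · have hN : G.neighborFinset v ∩ A = if v ∈ S then A else ∅ := by
      split_ifs with hvS
      · refine inter_eq_right.mpr fun u hu => ?_
        rw [mem_neighborFinset, adj_comm]
        exact (hA u hu v (ne_of_mem_of_not_mem hu hv)).mpr (mem_union_left _ hvS)
      · refine disjoint_iff_inter_eq_empty.mp (disjoint_right.mpr fun u hu hadj => ?_)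
        rw [mem_neighborFinset, adj_comm, hA u hu v (ne_of_mem_of_not_mem hu hv)] at hadj
        simp_all
    simp only [hv, if_false, zero_sub, sum_neg_distrib, sum_boole, filter_mem_eq_inter, hN]
    split_ifs <;> simp

theorem lapMatrix_mulVec_eq_smul_of_cliques {S A B : Finset V} (hSA : Disjoint S A)
    (hSB : Disjoint S B)
    (hA : ∀ a ∈ A, ∀ v, a ≠ v → (G.Adj a v ↔ v ∈ S ∪ A))
    (hB : ∀ b ∈ B, ∀ v, b ≠ v → (G.Adj b v ↔ v ∈ S ∪ B)) :
    let f : V → ℝ := fun v => (if v ∈ A then (#B : ℝ) else 0) - if v ∈ B then (#A : ℝ) else 0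
    G.lapMatrix ℝ *ᵥ f = (#S : ℝ) • f := by
  intro f
  have hf : f = (#B : ℝ) • (fun u => if u ∈ A then 1 else 0) -
      (#A : ℝ) • (fun u => if u ∈ B then 1 else 0) := by
    ext v
    simp [f]
  ext v
  rw [hf, mulVec_sub, mulVec_smul, mulVec_smul]
  simp only [Pi.sub_apply, Pi.smul_apply, smul_eq_mul, lapMatrix_mulVec_indicator_apply hSA hA,
    lapMatrix_mulVec_indicator_apply hSB hB]
  split_ifs <;> ring

end SimpleGraph

section CommutingGraph

variable {G : Type*} [Group G]

theorem mem_centSet_comm {x y : G} : y ∈ centSet x ↔ x ∈ centSet y := eq_comm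

theorem commGraph_adj_iff {x y : G} : (commGraph G).Adj x y ↔ x ≠ y ∧ y ∈ centSet x :=
  and_congr_right' eq_comm

theorem center_subset_centSet (u : G) : (Subgroup.center G : Set G) ⊆ centSet u :=
  fun _ hz => (Subgroup.mem_center_iff.mp hz u).symm

theorem commGraph_isUniversal_of_mem_center {z : G} (hz : z ∈ Subgroup.center G) :
    (commGraph G).IsUniversal z :=
  fun _ hzw => ⟨hzw, (Subgroup.mem_center_iff.mp hz _).symm⟩

theorem commGraph_connected : (commGraph G).Connected :=
  .of_isUniversal (commGraph_isUniversal_of_mem_center (one_mem _))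

theorem card_filter_mem_center [Fintype G] [DecidableEq G] :
    #{x : G | x ∈ Subgroup.center G} = Nat.card (Subgroup.center G) := by
  simp only [Nat.card_eq_fintype_card, Fintype.card_subtype]

theorem lapMult_zero [Fintype G] [DecidableEq G] : lapMult G 0 = 1 := by
  rw [lapMult, zero_smul, sub_zero]
  exact commGraph_connected.finrank_ker_toLin'_lapMatrix_eq_one

theorem lapMult_pos_iff [Fintype G] [DecidableEq G] {μ : ℝ} :
    0 < lapMult G μ ↔ ∃ f ≠ 0, commLap G *ᵥ f = μ • f :=
  finrank_ker_toLin'_sub_smul_pos_iff _ _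

def CentralizersEqOrMeetInCenter (G : Type*) [Group G] : Prop :=
  ∀ u v : G, u ∉ (Subgroup.center G : Set G) → v ∉ (Subgroup.center G : Set G) →
    centSet u = centSet v ∨ centSet u ∩ centSet v = (Subgroup.center G : Set G)

namespace CentralizersEqOrMeetInCenter

variable {u y : G}

theorem centSet_eq (hG : CentralizersEqOrMeetInCenter G) (hu : u ∉ Subgroup.center G)
    (hy : y ∈ centSet u) (hyZ : y ∉ Subgroup.center G) : centSet y = centSet u :=
  (hG y u hyZ hu).resolve_right fun h => hu (h.subset ⟨mem_centSet_comm.mp hy, rfl⟩)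

theorem commGraph_adj_iff (hG : CentralizersEqOrMeetInCenter G) (hu : u ∉ Subgroup.center G)
    (hy : y ∈ centSet u) (hyZ : y ∉ Subgroup.center G) {x : G} (hyx : y ≠ x) :
    (commGraph G).Adj y x ↔ x ∈ centSet u := by
  rw [_root_.commGraph_adj_iff, hG.centSet_eq hu hy hyZ]
  exact and_iff_right hyx

theorem exists_commLap_mulVec_eq_smul [Fintype G] [DecidableEq G]
    (hG : CentralizersEqOrMeetInCenter G) (hna : ¬ ∀ a b : G, a * b = b * a) :
    ∃ f ≠ 0, commLap G *ᵥ f = (Nat.card (Subgroup.center G) : ℝ) • f := by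
  classical
  obtain ⟨a, b, hab⟩ : ∃ a b : G, a * b ≠ b * a := by simpa using hna
  have ha : a ∉ Subgroup.center G := fun h => hab (Subgroup.mem_center_iff.mp h b).symm
  have hb : b ∉ Subgroup.center G := fun h => hab (Subgroup.mem_center_iff.mp h a)
  let Z : Finset G := {x | x ∈ Subgroup.center G}
  let C : G → Finset G := fun u => {x | x ∈ centSet u ∧ x ∉ Subgroup.center G}
  have hZC : ∀ u, Disjoint Z (C u) := fun u =>
    Finset.disjoint_left.mpr fun x hxZ hxC => by simp_all [Z, C]
  have hclique : ∀ u ∉ Subgroup.center G, ∀ y ∈ C u, ∀ x, y ≠ x →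
      ((commGraph G).Adj y x ↔ x ∈ Z ∪ C u) := by
    intro u hu y hy x hyx
    simp only [Z, C, mem_filter, mem_univ, true_and, mem_union] at hy ⊢
    rw [hG.commGraph_adj_iff hu hy.1 hy.2 hyx]
    have hZu := @center_subset_centSet _ _ u x
    tauto
  have haC' : a ∈ C a := mem_filter.mpr ⟨mem_univ a, rfl, ha⟩
  have hbC : b ∈ C b := mem_filter.mpr ⟨mem_univ b, rfl, hb⟩
  have haC : a ∉ C b := fun h => hab (mem_filter.mp h).2.1
  have hf := SimpleGraph.lapMatrix_mulVec_eq_smul_of_cliques (hZC a) (hZC b)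
    (hclique a ha) (hclique b hb)
  rw [card_filter_mem_center] at hf
  refine ⟨_, fun h => ?_, hf⟩
  have hfa : (#(C b) : ℝ) = 0 := by
    simpa [haC, haC'] using congrFun h a
  exact (card_pos.mpr ⟨b, hbC⟩).ne' (by exact_mod_cast hfa)

end CentralizersEqOrMeetInCenter

end CommutingGraph

/-- If for all `u, v ∉ Z(G)`, `C(u) = C(v)` or `C(u) ∩ C(v) = Z(G)`, the algebraic
connectivity of the commuting graph (the second-smallest Laplacian eigenvalue) is `|Z(G)|`:
`0` is an eigenvalue of multiplicity one, `|Z(G)|` is an eigenvalue, and every nonzero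
eigenvalue is at least `|Z(G)|`. -/
theorem algebraic_connectivity_eq_card_center (G : Type*) [Group G] [Fintype G]
    [DecidableEq G]
    (hna : ¬ ∀ a b : G, a * b = b * a)
    (hcond : ∀ u v : G, u ∉ (Subgroup.center G : Set G) →
      v ∉ (Subgroup.center G : Set G) →
      centSet u = centSet v ∨ centSet u ∩ centSet v = (Subgroup.center G : Set G)) :
    lapMult G 0 = 1 ∧ 0 < lapMult G (Nat.card (Subgroup.center G)) ∧
      ∀ μ : ℝ, 0 < lapMult G μ → μ ≠ 0 → (Nat.card (Subgroup.center G) : ℝ) ≤ μ := by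
  refine ⟨lapMult_zero, lapMult_pos_iff.mpr
    (CentralizersEqOrMeetInCenter.exists_commLap_mulVec_eq_smul hcond hna), fun μ hμ hμ0 => ?_⟩
  obtain ⟨f, hf, hfμ⟩ := lapMult_pos_iff.mp hμ
  have hZ := SimpleGraph.card_le_of_lapMatrix_mulVec_eq_smul {x | x ∈ Subgroup.center G}
    (fun _ hz => commGraph_isUniversal_of_mem_center (mem_filter.mp hz).2) hf hμ0 hfμ
  rwa [card_filter_mem_center] at hZ
end
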